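/- Let $K \in \mathbb{C}$ with $\mathrm{Re}\, K \geq 0$, $\vartheta > 2|\mathrm{Re}\, K|$, and $f \in L^2(\mathbb{R}, e^{\vartheta|t|}dt)$. Define $\tilde{u}^+(x) = \frac{1}{2K}\int_x^{\infty}\big(e^{K(x-y)} - e^{-K(x-y)}\big) f(y)\,dy$ for $x > 0$ (assuming $K \neq 0$). Then there exist constants $C > 0$ and $0 < \tilde{\vartheta} < \vartheta$ such that $|\tilde{u}^+(x)| \leq C e^{-\tilde{\vartheta} x} \|f\|_{L^2(\mathbb{R}, e^{\vartheta|t|}dt)}$ for all $x > 0$. -/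

import Mathlib

/-!
For `y > x` the kernel is bounded by `|e^{K(x-y)} - e^{-K(x-y)}| ≤ 2 e^{|Re K| (y-x)}`. Splitting
`e^{|Re K|(y-x)} |f(y)| = e^{|Re K|(y-x) - ϑy/2} · e^{ϑy/2} |f(y)|` and applying Cauchy–Schwarz on
`(x, ∞)`, the second factor has `L²` norm at most `‖f‖_{L²(e^{ϑ|t|})}` while the first has squared
norm `e^{-ϑx} / (ϑ - 2|Re K|)`, finite exactly because `2|Re K| < ϑ`. This gives the decay rate
`ϑ/2` with constant `1 / (|K| √(ϑ - 2|Re K|))`.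
-/

open Complex MeasureTheory Set

lemma norm_exp_sub_exp_neg_le (z : ℂ) : ‖exp z - exp (-z)‖ ≤ 2 * Real.exp |z.re| := by
  have h₁ := Real.exp_le_exp.2 (le_abs_self z.re)
  have h₂ := Real.exp_le_exp.2 (neg_le_abs z.re)
  calc ‖exp z - exp (-z)‖ ≤ ‖exp z‖ + ‖exp (-z)‖ := norm_sub_le _ _
    _ = Real.exp z.re + Real.exp (-z.re) := by rw [norm_exp, norm_exp, neg_re]
    _ ≤ 2 * Real.exp |z.re| := by linarith

lemma integral_mul_le_sqrt_mul_sqrt {α : Type*} [MeasurableSpace α] {μ : Measure α}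
    {u v : α → ℝ} (hu₀ : 0 ≤ᵐ[μ] u) (hv₀ : 0 ≤ᵐ[μ] v) (hu : MemLp u 2 μ) (hv : MemLp v 2 μ) :
    ∫ a, u a * v a ∂μ ≤ √(∫ a, u a ^ 2 ∂μ) * √(∫ a, v a ^ 2 ∂μ) := by
  have h := integral_mul_le_Lp_mul_Lq_of_nonneg Real.HolderConjugate.two_two hu₀ hv₀
    (by simpa using hu) (by simpa using hv)
  simpa only [Real.rpow_two, ← Real.sqrt_eq_rpow] using h

section Tail

variable {c ϑ x : ℝ}

lemma sq_exp_mul_sub (y : ℝ) :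
    Real.exp (c * (y - x) - ϑ / 2 * y) ^ 2
      = Real.exp (-(2 * c) * x) * Real.exp ((2 * c - ϑ) * y) := by
  rw [← Real.exp_nat_mul, ← Real.exp_add]
  ring_nf

lemma memLp_exp_mul_sub_Ioi (h : 2 * c < ϑ) :
    MemLp (fun y => Real.exp (c * (y - x) - ϑ / 2 * y)) 2 (volume.restrict (Ioi x)) := by
  refine (memLp_two_iff_integrable_sq (by fun_prop)).2 ?_
  simp_rw [sq_exp_mul_sub]
  exact (integrableOn_exp_mul_Ioi (by linarith) x).const_mul _

lemma setIntegral_sq_exp_mul_sub_Ioi (h : 2 * c < ϑ) :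
    ∫ y in Ioi x, Real.exp (c * (y - x) - ϑ / 2 * y) ^ 2 = Real.exp (-ϑ * x) / (ϑ - 2 * c) := by
  have hexp : Real.exp (-(2 * c) * x) * Real.exp ((2 * c - ϑ) * x) = Real.exp (-ϑ * x) := by
    rw [← Real.exp_add]
    ring_nf
  simp_rw [sq_exp_mul_sub, integral_const_mul, integral_exp_mul_Ioi (by linarith : 2 * c - ϑ < 0)]
  rw [mul_div_assoc', mul_neg, hexp, neg_div, ← div_neg, neg_sub]

end Tail

section Weighted

variable {E : Type*} [NormedAddCommGroup E] {f : ℝ → E} {c ϑ x : ℝ}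

lemma sq_norm_mul_exp_half {y : ℝ} (hy : 0 ≤ y) :
    (‖f y‖ * Real.exp (ϑ / 2 * y)) ^ 2 = ‖f y‖ ^ 2 * Real.exp (ϑ * |y|) := by
  rw [abs_of_nonneg hy, mul_pow, ← Real.exp_nat_mul]
  ring_nf

lemma memLp_norm_mul_exp_half_Ioi (hx : 0 ≤ x) (hf_meas : AEStronglyMeasurable f volume)
    (hf : Integrable (fun t => ‖f t‖ ^ 2 * Real.exp (ϑ * |t|))) :
    MemLp (fun y => ‖f y‖ * Real.exp (ϑ / 2 * y)) 2 (volume.restrict (Ioi x)) := by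
  refine (memLp_two_iff_integrable_sq (hf_meas.norm.mul (by fun_prop)).restrict).2 ?_
  exact hf.integrableOn.congr_fun (fun y hy => (sq_norm_mul_exp_half (hx.trans hy.le)).symm)
    measurableSet_Ioi

lemma setIntegral_sq_norm_mul_exp_half_Ioi_le (hx : 0 ≤ x)
    (hf : Integrable (fun t => ‖f t‖ ^ 2 * Real.exp (ϑ * |t|))) :
    ∫ y in Ioi x, (‖f y‖ * Real.exp (ϑ / 2 * y)) ^ 2 ≤ ∫ t, ‖f t‖ ^ 2 * Real.exp (ϑ * |t|) := by
  rw [setIntegral_congr_fun measurableSet_Ioi fun y hy => sq_norm_mul_exp_half (hx.trans hy.le)]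
  exact setIntegral_le_integral hf (ae_of_all _ fun t => by positivity)

lemma exp_mul_sub_mul_norm_eq (y : ℝ) :
    Real.exp (c * (y - x)) * ‖f y‖
      = Real.exp (c * (y - x) - ϑ / 2 * y) * (‖f y‖ * Real.exp (ϑ / 2 * y)) := by
  rw [mul_comm ‖f y‖, ← mul_assoc, ← Real.exp_add, sub_add_cancel]

theorem integrableOn_exp_mul_norm_Ioi (hc : 2 * c < ϑ) (hx : 0 ≤ x)
    (hf_meas : AEStronglyMeasurable f volume)
    (hf : Integrable (fun t => ‖f t‖ ^ 2 * Real.exp (ϑ * |t|))) :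
    IntegrableOn (fun y => Real.exp (c * (y - x)) * ‖f y‖) (Ioi x) := by
  simp_rw [exp_mul_sub_mul_norm_eq (ϑ := ϑ)]
  exact (memLp_exp_mul_sub_Ioi hc).integrable_mul (memLp_norm_mul_exp_half_Ioi hx hf_meas hf)

theorem setIntegral_exp_mul_norm_Ioi_le (hc : 2 * c < ϑ) (hx : 0 ≤ x)
    (hf_meas : AEStronglyMeasurable f volume)
    (hf : Integrable (fun t => ‖f t‖ ^ 2 * Real.exp (ϑ * |t|))) :
    ∫ y in Ioi x, Real.exp (c * (y - x)) * ‖f y‖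
      ≤ Real.exp (-(ϑ / 2) * x) / √(ϑ - 2 * c) * √(∫ t, ‖f t‖ ^ 2 * Real.exp (ϑ * |t|)) := by
  simp_rw [exp_mul_sub_mul_norm_eq (ϑ := ϑ)]
  refine (integral_mul_le_sqrt_mul_sqrt (ae_of_all _ fun _ => by positivity)
    (ae_of_all _ fun _ => by positivity) (memLp_exp_mul_sub_Ioi hc)
    (memLp_norm_mul_exp_half_Ioi hx hf_meas hf)).trans ?_
  rw [setIntegral_sq_exp_mul_sub_Ioi hc, Real.sqrt_div (Real.exp_pos _).le, ← Real.exp_half,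
    neg_mul, neg_mul, neg_div, mul_div_right_comm]
  gcongr
  exact setIntegral_sq_norm_mul_exp_half_Ioi_le hx hf

end Weighted

theorem stmt4_general (ϑ : ℝ) (K : ℂ) (hK : K ≠ 0) (hϑ : 2 * |K.re| < ϑ)
    (f : ℝ → ℂ) (hf_meas : AEStronglyMeasurable f volume)
    (hf : Integrable (fun t : ℝ => ‖f t‖ ^ 2 * Real.exp (ϑ * |t|)) volume) :
    ∃ C > (0:ℝ), ∃ ϑ' : ℝ, 0 < ϑ' ∧ ϑ' < ϑ ∧
      ∀ x : ℝ, 0 < x →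
        ‖(1 / (2 * K)) * ∫ y in Set.Ioi x,
            (Complex.exp (K * (x - y)) - Complex.exp (-K * (x - y))) * f y‖
          ≤ C * Real.exp (-ϑ' * x) *
              Real.sqrt (∫ t : ℝ, ‖f t‖ ^ 2 * Real.exp (ϑ * |t|)) := by
  have hϑ₀ : 0 < ϑ := (mul_nonneg zero_le_two (abs_nonneg _)).trans_lt hϑ
  refine ⟨1 / (‖K‖ * √(ϑ - 2 * |K.re|)), by positivity, ϑ / 2, half_pos hϑ₀, half_lt_self hϑ₀,
    fun x hx => ?_⟩
  have hkernel : ∀ y ∈ Ioi x, ‖(exp (K * (x - y)) - exp (-K * (x - y))) * f y‖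
      ≤ 2 * (Real.exp (|K.re| * (y - x)) * ‖f y‖) := by
    intro y hy
    have hre : |(K * (x - y)).re| = |K.re| * (y - x) := by
      simp [abs_mul, abs_of_neg (sub_neg.2 (mem_Ioi.1 hy))]
    rw [norm_mul, neg_mul, ← hre, ← mul_assoc]
    gcongr
    exact norm_exp_sub_exp_neg_le _
  have hint := (integrableOn_exp_mul_norm_Ioi hϑ hx.le hf_meas hf).const_mul 2
  calc _ = ‖K‖⁻¹ / 2 * ‖∫ y in Ioi x, (exp (K * (x - y)) - exp (-K * (x - y))) * f y‖ := by
        rw [norm_mul, norm_div, norm_mul]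
        simp [div_eq_inv_mul, mul_comm]
    _ ≤ ‖K‖⁻¹ / 2 * ∫ y in Ioi x, 2 * (Real.exp (|K.re| * (y - x)) * ‖f y‖) := by
        gcongr
        exact norm_integral_le_of_norm_le hint (ae_restrict_of_forall_mem measurableSet_Ioi hkernel)
    _ = ‖K‖⁻¹ * ∫ y in Ioi x, Real.exp (|K.re| * (y - x)) * ‖f y‖ := by
        rw [integral_const_mul]
        ring
    _ ≤ ‖K‖⁻¹ * (Real.exp (-(ϑ / 2) * x) / √(ϑ - 2 * |K.re|)
          * √(∫ t, ‖f t‖ ^ 2 * Real.exp (ϑ * |t|))) := by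
        gcongr
        exact setIntegral_exp_mul_norm_Ioi_le hϑ hx.le hf_meas hf
    _ = _ := by field_simp

/-- Exponential decay of the remainder
`ũ⁺(x) = (1/(2K)) ∫ₓ^∞ (e^{K(x-y)} - e^{-K(x-y)}) f(y) dy` for `x > 0`. -/
theorem stmt4 (ϑ : ℝ) (K : ℂ) (hK : K ≠ 0) (hKre : 0 ≤ K.re) (hϑ : 2 * |K.re| < ϑ)
    (f : ℝ → ℂ) (hf_meas : AEStronglyMeasurable f volume)
    (hf : Integrable (fun t : ℝ => ‖f t‖ ^ 2 * Real.exp (ϑ * |t|)) volume) :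
    ∃ C > (0:ℝ), ∃ ϑ' : ℝ, 0 < ϑ' ∧ ϑ' < ϑ ∧
      ∀ x : ℝ, 0 < x →
        ‖(1 / (2 * K)) * ∫ y in Set.Ioi x,
            (Complex.exp (K * (x - y)) - Complex.exp (-K * (x - y))) * f y‖
          ≤ C * Real.exp (-ϑ' * x) *
              Real.sqrt (∫ t : ℝ, ‖f t‖ ^ 2 * Real.exp (ϑ * |t|)) :=
  stmt4_general ϑ K hK hϑ f hf_meas hf
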